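/- There exists a unique family of symmetric functions {h̃_λ}, indexed by all integer partitions λ, satisfying h_λ = Σ_π h̃_{m̃(π)} for every partition λ, where the sum runs over all multiset partitions π of {1^{λ_1}, 2^{λ_2}, …, ℓ^{λ_ℓ}}; moreover each h̃_λ has top homogeneous component h_λ (i.e., h̃_λ = h_λ minus a linear combination of h̃_{m̃(π)} with |m̃(π)| < |λ|), and the family {h̃_λ} is a linear basis of the ring of symmetric functions over ℚ. -/

import Mathlib

open scoped BigOperators

noncomputable section

/-- The ring of symmetric functions over `ℚ`, realized as the free commutative
`ℚ`-algebra on the power sums `p_1, p_2, p_3, …`. -/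
abbrev SymF : Type := MvPolynomial ℕ+ ℚ

/-- The power sum symmetric function `p_k`. -/
def pp (k : ℕ+) : SymF := MvPolynomial.X k

/-- `p_μ = p_{μ_1} p_{μ_2} ⋯` for a partition `μ` (a multiset of positive parts). -/
def pProd (mu : Multiset ℕ+) : SymF := (mu.map pp).prod

/-- The size `|μ|` of a partition. -/
def psize (mu : Multiset ℕ+) : ℕ := (mu.map (fun i => (i : ℕ))).sum

/-- The largest part `μ_1` of a partition (0 for the empty partition). -/
def maxPart (mu : Multiset ℕ+) : ℕ := (mu.map (fun i => (i : ℕ))).sup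

/-- `z_μ = ∏_i m_i(μ)! · i^{m_i(μ)}`. -/
def zMult (mu : Multiset ℕ+) : ℕ :=
  (mu.map (fun i => (i : ℕ))).prod * ∏ i ∈ mu.toFinset, (mu.count i).factorial

/-- `Ξ_μ` : the multiset of eigenvalues of a permutation matrix of cycle type `μ`,
i.e. the multiset union over all parts `μ_i` of all `μ_i`-th roots of unity. -/
def Xi (mu : Multiset ℕ+) : Multiset ℂ :=
  mu.bind (fun k => (Multiset.range (k : ℕ)).map
    (fun j => Complex.exp (2 * (Real.pi : ℂ) * Complex.I * (j : ℂ) / ((k : ℕ) : ℂ))))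

/-- Evaluation `f[Ξ_μ]` of a symmetric function at the eigenvalues of a permutation
matrix of cycle type `μ` : substitute each power sum `p_k` by the `k`-th power sum of
the members of the multiset `Ξ_μ`. -/
def evalXi (mu : Multiset ℕ+) (f : SymF) : ℂ :=
  MvPolynomial.aeval (fun k : ℕ+ => ((Xi mu).map (fun x => x ^ (k : ℕ))).sum) f

/-- The complete homogeneous symmetric function `h_n = Σ_{μ ⊢ n} p_μ / z_μ`. -/
def hn (n : ℕ) : SymF :=
  ∑ᶠ mu ∈ {mu : Multiset ℕ+ | psize mu = n}, ((zMult mu : ℚ))⁻¹ • pProd mu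

/-- `h_λ = h_{λ_1} h_{λ_2} ⋯`. -/
def hProd (lam : Multiset ℕ+) : SymF := (lam.map (fun i => hn (i : ℕ))).prod

/-- `h_a` for an integer index, with `h_a = 0` for `a < 0`. -/
def hZ (a : ℤ) : SymF := if 0 ≤ a then hn a.toNat else 0

/-- `h_l = h_{l_1} ⋯ h_{l_r}` for a list of row lengths. -/
def hOfList (l : List ℕ) : SymF := (l.map hn).prod

/-- `z` of an exponent vector: the monomial `∏ p_k^{d_k}` is `p_γ` where `γ` has
`d_k` parts equal to `k`, and `zMon d = z_γ`. -/
def zMon (d : ℕ+ →₀ ℕ) : ℚ :=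
  ∏ k ∈ d.support, ((d k).factorial : ℚ) * ((k : ℕ) : ℚ) ^ (d k)

/-- The Hall inner product on `SymF`, determined by `⟨p_γ, p_δ⟩ = δ_{γδ} z_γ`. -/
def hall (f g : SymF) : ℚ :=
  ∑ d ∈ f.support, f.coeff d * g.coeff d * zMon d

/-- The Schur function indexed by a list of row lengths, via the Jacobi–Trudi
determinant `s_α = det(h_{α_i - i + j})`. -/
def schurOfList (l : List ℕ) : SymF :=
  (Matrix.of (fun i j : Fin l.length => hZ ((l.get i : ℤ) + (j : ℤ) - (i : ℤ)))).det

/-- The irreducible symmetric group character `χ^α(γ) = ⟨s_α, p_γ⟩`. -/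
def chi (l : List ℕ) (gamma : Multiset ℕ+) : ℚ := hall (schurOfList l) (pProd gamma)

/-- The degree of a symmetric function (the power sum `p_k` having degree `k`). -/
def symDeg (f : SymF) : ℕ :=
  MvPolynomial.weightedTotalDegree (fun k : ℕ+ => (k : ℕ)) f

/-- The parts of a partition, sorted decreasingly `(λ_1, λ_2, …)`. -/
def toList (lam : Multiset ℕ+) : List ℕ :=
  ((lam.map (fun i => (i : ℕ))).sort (· ≤ ·)).reverse

/-- The content multiset `{1^{λ_1}, 2^{λ_2}, …, ℓ^{λ_ℓ}}` of a partition. -/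
def contentMultiset (lam : Multiset ℕ+) : Multiset ℕ :=
  ((toList lam).zipIdx.flatMap (fun ia => List.replicate ia.1 (ia.2 + 1)) : List ℕ)

/-- `π` is a multiset partition of the multiset `S`: a multiset of nonempty
multisets whose multiset union is `S`. -/
def IsMSP (pi : Multiset (Multiset ℕ)) (S : Multiset ℕ) : Prop :=
  (0 : Multiset ℕ) ∉ pi ∧ pi.sum = S

/-- `m̃(π)`: the partition of `ℓ(π)` recording the multiplicities with which the
distinct blocks occur in the multiset partition `π`. -/
def mtilde (pi : Multiset (Multiset ℕ)) : Multiset ℕ+ :=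
  pi.toFinset.val.map (fun B => (pi.count B).toPNat')

/-- The defining relation of the induced trivial character basis `h̃`:
`h_λ = Σ_{π ⊩ {1^{λ_1},…,ℓ^{λ_ℓ}}} h̃_{m̃(π)}` for every partition `λ`. -/
def HTdef (ht : Multiset ℕ+ → SymF) : Prop :=
  ∀ lam : Multiset ℕ+,
    hProd lam =
      ∑ᶠ pi ∈ {pi : Multiset (Multiset ℕ) | IsMSP pi (contentMultiset lam)},
        ht (mtilde pi)

/-- The defining property of the irreducible character basis `s̃` : each `s̃_λ` has
degree `|λ|` and satisfies `s̃_λ[Ξ_γ] = χ^{(|γ|-|λ|,λ)}(γ)` whenever `|γ| ≥ |λ|+λ_1`. -/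
def STdef (st : Multiset ℕ+ → SymF) : Prop :=
  ∀ lam : Multiset ℕ+,
    symDeg (st lam) = psize lam ∧
    ∀ gamma : Multiset ℕ+, psize lam + maxPart lam ≤ psize gamma →
      evalXi gamma (st lam) =
        ((chi ((psize gamma - psize lam) :: toList lam) gamma : ℚ) : ℂ)

/-!
The defining relation is unitriangular. The partition of `{1^{λ_1}, …, ℓ^{λ_ℓ}}` into singletons
contributes `h̃_λ`, and every other multiset partition `π` has fewer blocks than elements, so
`|m̃(π)| = ℓ(π) < |λ|`. Hence `h̃` is determined by recursion on `|λ|`, and `h̃_λ - h_λ` lies in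
the span of the `h_μ` with `|μ| < |λ|`, which are weighted homogeneous of degree `|μ|`.
Since `h_k = p_k / k + (a polynomial in p_1, …, p_{k-1})`, the substitution `p_k ↦ h_k` is an
automorphism of `ℚ[p_1, p_2, …]`, so the `h_λ` form a basis; a family that is unitriangular
with respect to a basis, for the filtration by `|λ|`, is again a basis.
-/

namespace Module.Basis

variable {ι R M : Type*} [Ring R] [AddCommGroup M] [Module R M]
  (b : Basis ι R M) (size : ι → ℕ)

theorem repr_eq_zero_of_mem_span_sizeLT {n : ℕ} {x : M}
    (hx : x ∈ Submodule.span R (b '' {j | size j < n})) {i : ι} (hi : n ≤ size i) :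
    b.repr x i = 0 := by
  induction hx using Submodule.span_induction with
  | mem _ hy =>
    obtain ⟨j, hj, rfl⟩ := hy
    rw [b.repr_self]
    exact Finsupp.single_eq_of_ne (by rintro rfl; exact (hj.trans_le hi).false)
  | zero => simp
  | add _ _ _ _ hx hy => simp [hx, hy]
  | smul _ _ _ hx => simp [hx]

variable {b size} {v : ι → M}
  (hv : ∀ i, v i - b i ∈ Submodule.span R (b '' {j | size j < size i}))
include hv

theorem repr_apply_of_sub_mem_span_sizeLT {i j : ι} (hij : size i ≤ size j) :
    b.repr (v i) j = Finsupp.single i 1 j := by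
  rw [← sub_add_cancel (v i) (b i), map_add, Finsupp.add_apply,
    b.repr_eq_zero_of_mem_span_sizeLT size (hv i) hij, b.repr_self, zero_add]

theorem linearIndependent_of_sub_mem_span_sizeLT : LinearIndependent R v := by
  rw [linearIndependent_iff]
  intro l hl
  by_contra hne
  obtain ⟨i, hi, hmax⟩ :=
    l.support.exists_max_image size (Finsupp.support_nonempty_iff.2 hne)
  have hcoeff : b.repr (Finsupp.linearCombination R v l) i = l i := by
    rw [Finsupp.linearCombination_apply, Finsupp.sum, map_sum, Finsupp.finsetSum_apply,
      Finset.sum_eq_single i]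
    · simp [repr_apply_of_sub_mem_span_sizeLT hv le_rfl]
    · intro j hj hji
      simp [repr_apply_of_sub_mem_span_sizeLT hv (hmax j hj), Finsupp.single_eq_of_ne' hji]
    · exact fun h => (h hi).elim
  rw [hl, map_zero, Finsupp.zero_apply] at hcoeff
  exact Finsupp.mem_support_iff.1 hi hcoeff.symm

theorem span_sizeLT_le_span_of_sub_mem_span_sizeLT (n : ℕ) :
    Submodule.span R (b '' {j | size j < n}) ≤ Submodule.span R (Set.range v) := by
  induction n using Nat.strong_induction_on with
  | _ n ih =>
    rw [Submodule.span_le]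
    rintro _ ⟨i, hi, rfl⟩
    rw [← sub_sub_cancel (v i) (b i)]
    exact Submodule.sub_mem _ (Submodule.subset_span ⟨i, rfl⟩) (ih _ hi (hv i))

noncomputable def ofUnitriangular : Basis ι R M :=
  .mk (linearIndependent_of_sub_mem_span_sizeLT hv) <| by
    rw [← b.span_eq, Submodule.span_le]
    rintro _ ⟨i, rfl⟩
    exact span_sizeLT_le_span_of_sub_mem_span_sizeLT hv (size i + 1)
      (Submodule.subset_span ⟨i, Nat.lt_succ_self _, rfl⟩)

theorem coe_ofUnitriangular : ⇑(ofUnitriangular hv) = v := coe_mk _ _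

end Module.Basis

section TriangularSystem

variable {ι κ M : Type*} [AddCommGroup M]

noncomputable def solveTriangular (size : ι → ℕ) (E : ι → Finset κ) (m : κ → ι)
    (hE : ∀ i, ∀ π ∈ E i, size (m π) < size i) (h : ι → M) (i : ι) : M :=
  h i - ∑ π ∈ (E i).attach, solveTriangular size E m hE h (m π)
termination_by size i
decreasing_by exact hE i π.1 π.2

variable {size : ι → ℕ} {E : ι → Finset κ} {m : κ → ι}

theorem existsUnique_eq_add_sum (hE : ∀ i, ∀ π ∈ E i, size (m π) < size i) (h : ι → M) :
    ∃! f : ι → M, ∀ i, h i = f i + ∑ π ∈ E i, f (m π) := by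
  refine ⟨solveTriangular size E m hE h, fun i => ?_, fun f hf => funext fun i => ?_⟩
  · rw [solveTriangular, Finset.sum_attach (E i) (fun π => solveTriangular size E m hE h (m π)),
      sub_add_cancel]
  · induction hi : size i using Nat.strong_induction_on generalizing i with
    | _ n ih =>
      rw [eq_sub_of_add_eq (hf i).symm, solveTriangular,
        Finset.sum_attach (E i) (fun π => solveTriangular size E m hE h (m π))]
      exact congrArg _ (Finset.sum_congr rfl fun π hπ => ih _ (hi ▸ hE i π hπ) _ rfl)

theorem sub_mem_span_of_eq_add_sum (R : Type*) [Ring R] [Module R M]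
    (hE : ∀ i, ∀ π ∈ E i, size (m π) < size i) {h f : ι → M}
    (hf : ∀ i, h i = f i + ∑ π ∈ E i, f (m π)) (i : ι) :
    f i - h i ∈ Submodule.span R (h '' {j | size j < size i}) := by
  induction hi : size i using Nat.strong_induction_on generalizing i with
  | _ n ih =>
    rw [hf i, sub_add_cancel_left, neg_mem_iff]
    refine Submodule.sum_mem _ fun π hπ => ?_
    have hlt := hi ▸ hE i π hπ
    rw [← sub_add_cancel (f (m π)) (h (m π))]
    refine Submodule.add_mem _ ?_ (Submodule.subset_span ⟨_, hlt, rfl⟩)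
    refine Submodule.span_mono (Set.image_mono fun j hj => ?_) (ih _ hlt _ rfl)
    exact lt_trans hj hlt

end TriangularSystem

namespace MvPolynomial

variable {σ R S : Type*} [CommSemiring R] [CommSemiring S] [Algebra R S]

theorem aeval_congr_of_mem_supported {s : Set σ} {p : MvPolynomial σ R} (hp : p ∈ supported R s)
    {f f' : σ → S} (hf : ∀ i ∈ s, f i = f' i) : aeval f p = aeval f' p :=
  eval₂Hom_congr' rfl (fun i hi _ => hf i (mem_supported.1 hp hi)) rfl

theorem aeval_monomial_toFinsupp [DecidableEq σ] (F : σ → S) (s : Multiset σ) :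
    aeval F (monomial (Multiset.toFinsupp s) (1 : R)) = (s.map F).prod := by
  rw [aeval_monomial, map_one, one_mul, Finset.prod_multiset_map_count, Finsupp.prod,
    Multiset.toFinsupp_support]
  simp only [Multiset.toFinsupp_apply]

theorem IsWeightedHomogeneous.multiset_prod {ι M : Type*} [AddCommMonoid M] {w : σ → M}
    (s : Multiset ι) (φ : ι → MvPolynomial σ R) (n : ι → M)
    (h : ∀ i ∈ s, IsWeightedHomogeneous w (φ i) (n i)) :
    IsWeightedHomogeneous w (s.map φ).prod (s.map n).sum := by
  induction s using Multiset.induction_on with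
  | empty => exact isWeightedHomogeneous_one R w
  | cons a s ih =>
    simp only [Multiset.map_cons, Multiset.prod_cons, Multiset.sum_cons]
    exact (h a (Multiset.mem_cons_self a s)).mul
      (ih fun i hi => h i (Multiset.mem_cons_of_mem hi))

end MvPolynomial

namespace MvPolynomial

open scoped Classical in
-- Only the variables `i < k` occur in `g k - c k • X k`; the `if` makes the recursion well founded.
noncomputable def triangularInverse {σ R : Type*} [Preorder σ] [WellFoundedLT σ] [CommRing R]
    (g : σ → MvPolynomial σ R) (c : σ → Rˣ) (k : σ) : MvPolynomial σ R :=
  (↑(c k)⁻¹ : R) • (X k -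
    aeval (fun i => if i < k then triangularInverse g c i else 0) (g k - (c k : R) • X k))
termination_by wellFounded_lt.wrap k
decreasing_by assumption

variable {σ R : Type*} [Preorder σ] [WellFoundedLT σ] [CommRing R]
  {g : σ → MvPolynomial σ R} {c : σ → Rˣ}
  (hg : ∀ k, g k - (c k : R) • X k ∈ supported R {i | i < k})
include hg

theorem aeval_triangularInverse_sub (k : σ) :
    aeval (triangularInverse g c) (g k - (c k : R) • X k) =
      X k - (c k : R) • triangularInverse g c k := by
  classical
  rw [triangularInverse, smul_smul, Units.mul_inv, one_smul, sub_sub_cancel]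
  exact aeval_congr_of_mem_supported (hg k) (fun i hi => (if_pos hi).symm)

theorem aeval_triangularInverse_apply (k : σ) :
    aeval (triangularInverse g c) (g k) = X k := by
  have h := aeval_triangularInverse_sub hg k
  rwa [map_sub, map_smul, aeval_X, sub_left_inj] at h

theorem aeval_apply_triangularInverse (k : σ) :
    aeval g (triangularInverse g c k) = X k := by
  induction k using WellFoundedLT.induction with
  | _ k ih =>
    classical
    rw [triangularInverse, map_smul, map_sub, aeval_X, ← AlgHom.comp_apply, comp_aeval,
      aeval_congr_of_mem_supported (hg k) (f' := X)
        (fun i (hi : i < k) => by rw [if_pos hi, ih i hi]),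
      aeval_X_left_apply, sub_sub_cancel, smul_smul, Units.inv_mul, one_smul]

noncomputable def aevalEquivOfTriangular : MvPolynomial σ R ≃ₐ[R] MvPolynomial σ R :=
  AlgEquiv.ofAlgHom (aeval g) (aeval (triangularInverse g c))
    (algHom_ext fun k => by
      rw [AlgHom.comp_apply, aeval_X, aeval_apply_triangularInverse hg, AlgHom.id_apply])
    (algHom_ext fun k => by
      rw [AlgHom.comp_apply, aeval_X, aeval_triangularInverse_apply hg, AlgHom.id_apply])

theorem coe_aevalEquivOfTriangular : ⇑(aevalEquivOfTriangular hg) = aeval g := rfl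

end MvPolynomial

namespace Multiset

variable {α : Type*} [DecidableEq α]

theorem finite_setOf_card_le_of_forall_mem (t : Multiset α) (N : ℕ) :
    {s : Multiset α | card s ≤ N ∧ ∀ a ∈ s, a ∈ t}.Finite := by
  refine (N • t).powerset.toFinset.finite_toSet.subset fun s ⟨hN, ht⟩ => ?_
  rw [Finset.mem_coe, mem_toFinset, mem_powerset, le_iff_count]
  intro a
  by_cases ha : a ∈ s
  · rw [count_nsmul]
    exact (count_le_card a s).trans
      (hN.trans (Nat.le_mul_of_pos_right N (count_pos.2 (ht a ha))))
  · simp [count_eq_zero_of_notMem ha]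

def multiplicities (s : Multiset α) : Multiset ℕ := s.toFinset.val.map s.count

theorem sum_multiplicities (s : Multiset α) : (multiplicities s).sum = card s :=
  toFinset_sum_count_eq s

theorem multiplicities_map {β : Type*} [DecidableEq β] {f : α → β} (hf : Function.Injective f)
    (s : Multiset α) : multiplicities (s.map f) = multiplicities s := by
  rw [multiplicities, multiplicities, toFinset_map, Finset.image_val_of_injOn hf.injOn, map_map]
  exact map_congr rfl fun a _ => count_map_eq_count' f s hf a

theorem multiplicities_replicate_add {n : ℕ} {a : α} {t : Multiset α} (hn : n ≠ 0)
    (ha : a ∉ t) : multiplicities (replicate n a + t) = n ::ₘ multiplicities t := by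
  rw [multiplicities, toFinset_add, toFinset_replicate, if_neg hn, Finset.singleton_union,
    Finset.insert_val_of_notMem (by simpa using ha), map_cons, count_add, count_replicate_self,
    count_eq_zero_of_notMem ha, add_zero, multiplicities]
  refine congrArg _ (map_congr rfl fun b hb => ?_)
  rw [count_add, count_replicate, if_neg (by rintro rfl; simp_all), zero_add]

end Multiset

open MvPolynomial Multiset

theorem psize_eq_sum_map (mu : Multiset ℕ+) : psize mu = (mu.map (↑)).sum := by
  simp [psize]

theorem finite_setOf_psize_eq (n : ℕ) : {mu : Multiset ℕ+ | psize mu = n}.Finite :=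
  (Set.finite_range fun p : n.Partition => p.parts.map Nat.toPNat').subset fun mu hmu =>
    ⟨⟨mu.map (↑), by simp, (psize_eq_sum_map mu).symm.trans hmu⟩, by simp [Multiset.map_map]⟩

theorem eq_singleton_of_psize_eq {mu : Multiset ℕ+} {k : ℕ+} (hmu : psize mu = k) (hk : k ∈ mu) :
    mu = {k} := by
  obtain ⟨rest, rfl⟩ := Multiset.exists_cons_of_mem hk
  rw [psize_eq_sum_map, Multiset.map_cons, Multiset.sum_cons, add_eq_left,
    Multiset.sum_eq_zero_iff] at hmu
  have hrest : rest = 0 := Multiset.eq_zero_of_forall_notMem fun i hi =>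
    i.ne_zero (hmu i (Multiset.mem_map_of_mem _ hi))
  rw [hrest]
  rfl

theorem lt_of_mem_of_psize_eq {mu : Multiset ℕ+} {k i : ℕ+} (hmu : psize mu = k)
    (hne : mu ≠ {k}) (hi : i ∈ mu) : i < k := by
  refine lt_of_le_of_ne ?_ fun hik => hne (eq_singleton_of_psize_eq hmu (hik ▸ hi))
  rw [← PNat.coe_le_coe, ← hmu, psize_eq_sum_map]
  exact Multiset.le_sum_of_mem (Multiset.mem_map_of_mem _ hi)

theorem hProd_eq_prod_map (lam : Multiset ℕ+) :
    hProd lam = (lam.map fun k : ℕ+ => hn k).prod := by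
  simp [hProd]

theorem hn_sub_smul_pp_mem_supported (k : ℕ+) :
    hn k - ((k : ℚ)⁻¹) • pp k ∈ supported ℚ {i | i < k} := by
  have hk : ({k} : Multiset ℕ+) ∈ (finite_setOf_psize_eq k).toFinset := by simp [psize]
  rw [hn, finsum_mem_eq_finite_toFinset_sum _ (finite_setOf_psize_eq k),
    ← Finset.add_sum_erase _ _ hk]
  have hzk : zMult {k} = k := by simp [zMult]
  rw [hzk, pProd, Multiset.map_singleton, Multiset.prod_singleton, add_sub_cancel_left]
  refine Subalgebra.sum_mem _ fun mu hmu => Subalgebra.smul_mem _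
    (Subalgebra.multiset_prod_mem (supported ℚ {i | i < k}) fun x hx => ?_) _
  obtain ⟨i, hi, rfl⟩ := Multiset.mem_map.1 hx
  rw [Finset.mem_erase, Set.Finite.mem_toFinset] at hmu
  exact (X_mem_supported (R := ℚ)).2 (lt_of_mem_of_psize_eq hmu.2 hmu.1 hi)

noncomputable def hBasis : Module.Basis (Multiset ℕ+) ℚ SymF :=
  ((basisMonomials ℕ+ ℚ).reindex Multiset.toFinsupp.toEquiv.symm).map
    (aevalEquivOfTriangular (g := fun k => hn k) (c := fun k => Units.mk0 ((k : ℚ)⁻¹)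
      (by positivity)) hn_sub_smul_pp_mem_supported).toLinearEquiv

theorem coe_hBasis : ⇑hBasis = hProd := by
  funext lam
  rw [hBasis, Module.Basis.map_apply, Module.Basis.reindex_apply, coe_basisMonomials,
    hProd_eq_prod_map]
  exact aeval_monomial_toFinsupp (R := ℚ) (S := SymF) _ lam

theorem isWeightedHomogeneous_hProd (lam : Multiset ℕ+) :
    IsWeightedHomogeneous (fun k : ℕ+ => (k : ℕ)) (hProd lam) (psize lam) := by
  rw [hProd_eq_prod_map, psize_eq_sum_map]
  refine IsWeightedHomogeneous.multiset_prod lam (fun k => hn k) (fun k : ℕ+ => (k : ℕ))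
    fun k _ => ?_
  refine finsum_mem_induction (· ∈ weightedHomogeneousSubmodule ℚ _ _) (zero_mem _)
    (fun _ _ => add_mem) fun mu hmu => Submodule.smul_mem _ _ ?_
  rw [mem_weightedHomogeneousSubmodule, pProd, ← hmu, psize_eq_sum_map]
  exact IsWeightedHomogeneous.multiset_prod _ _ _ fun i _ => isWeightedHomogeneous_X ℚ _ i

theorem span_hProd_le_restrictSupport (n : ℕ) :
    Submodule.span ℚ (hProd '' {mu | psize mu < n}) ≤
      restrictSupport ℚ {d | Finsupp.weight (fun k : ℕ+ => (k : ℕ)) d < n} := by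
  rw [Submodule.span_le]
  rintro _ ⟨mu, hmu, rfl⟩ d hd
  exact (isWeightedHomogeneous_hProd mu (mem_support_iff.1 hd)).trans_lt hmu

theorem multiplicities_zipIdx_flatMap_replicate (L : List ℕ) (hL : ∀ a ∈ L, a ≠ 0) (k : ℕ) :
    multiplicities
        (((L.zipIdx k).flatMap fun ia => List.replicate ia.1 (ia.2 + 1) : List ℕ) :
          Multiset ℕ) = L := by
  induction L generalizing k with
  | nil => rfl
  | cons a L ih =>
    have hk : k + 1 ∉ ((L.zipIdx (k + 1)).flatMap fun ia => List.replicate ia.1 (ia.2 + 1)) := by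
      simp only [List.mem_flatMap, List.mem_replicate, not_exists, not_and]
      intro ia hia _ hk
      have := (List.mem_zipIdx hia).1
      omega
    rw [List.zipIdx_cons, List.flatMap_cons, ← coe_add, coe_replicate,
      multiplicities_replicate_add (hL a (List.mem_cons_self ..)) (mem_coe.not.2 hk),
      ih (fun b hb => hL b (List.mem_cons_of_mem a hb))]
    rfl

theorem coe_toList_eq_map_coe (lam : Multiset ℕ+) :
    (_root_.toList lam : Multiset ℕ) = lam.map (↑) := by
  simp [_root_.toList]

theorem multiplicities_contentMultiset (lam : Multiset ℕ+) :
    multiplicities (contentMultiset lam) = lam.map (↑) := by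
  rw [← coe_toList_eq_map_coe]
  refine multiplicities_zipIdx_flatMap_replicate _ (fun a ha => ?_) 0
  have ha' : a ∈ lam.map (↑) := coe_toList_eq_map_coe lam ▸ mem_coe.2 ha
  obtain ⟨i, -, rfl⟩ := mem_map.1 ha'
  exact i.ne_zero

theorem card_contentMultiset (lam : Multiset ℕ+) : card (contentMultiset lam) = psize lam := by
  rw [← sum_multiplicities, multiplicities_contentMultiset, psize_eq_sum_map]

theorem map_coe_mtilde (pi : Multiset (Multiset ℕ)) : (mtilde pi).map (↑) = multiplicities pi := by
  rw [mtilde, multiplicities, map_map]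
  refine Multiset.map_congr rfl fun B hB => ?_
  rw [Function.comp_apply, Nat.toPNat'_coe, if_pos (count_pos.2 (mem_toFinset.1 hB))]

theorem psize_mtilde (pi : Multiset (Multiset ℕ)) : psize (mtilde pi) = card pi := by
  rw [psize_eq_sum_map, map_coe_mtilde, sum_multiplicities]

theorem mtilde_map_singleton_contentMultiset (lam : Multiset ℕ+) :
    mtilde ((contentMultiset lam).map ({·})) = lam :=
  map_injective PNat.coe_injective <| by
    rw [map_coe_mtilde, multiplicities_map (fun _ _ => singleton_inj.1),
      multiplicities_contentMultiset]

theorem isMSP_map_singleton (S : Multiset ℕ) : IsMSP (S.map ({·})) S :=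
  ⟨by simp, sum_map_singleton S⟩

namespace IsMSP

variable {pi : Multiset (Multiset ℕ)} {S : Multiset ℕ}

theorem card_eq_sum (h : IsMSP pi S) : card S = (pi.map card).sum := h.2 ▸ card_join pi

theorem one_le_card (h : IsMSP pi S) {B : Multiset ℕ} (hB : B ∈ pi) : 1 ≤ card B :=
  card_pos.2 fun h0 => h.1 (h0 ▸ hB)

theorem card_le (h : IsMSP pi S) : card pi ≤ card S := by
  rw [h.card_eq_sum, ← card_map card pi]
  simpa using card_nsmul_le_sum (s := pi.map card) (a := 1) fun n hn => by
    obtain ⟨B, hB, rfl⟩ := mem_map.1 hn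
    exact h.one_le_card hB

theorem eq_map_singleton (h : IsMSP pi S) (hpi : ∀ B ∈ pi, card B = 1) :
    pi = S.map ({·}) := by
  calc pi = (pi.map fun B => B.map ({·})).join := by
        refine (sum_map_singleton pi).symm.trans
          (congrArg _ (Multiset.map_congr rfl fun B hB => ?_))
        obtain ⟨b, rfl⟩ := card_eq_one.1 (hpi B hB)
        rfl
    _ = S.map ({·}) := by rw [← map_join, join, h.2]

theorem card_lt (h : IsMSP pi S) (hne : pi ≠ S.map ({·})) : card pi < card S := by
  obtain ⟨B, hB, hB1⟩ : ∃ B ∈ pi, card B ≠ 1 := by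
    by_contra! hpi
    exact hne (h.eq_map_singleton hpi)
  have hcard : card pi = (pi.map fun _ => 1).sum := by simp
  rw [h.card_eq_sum, hcard]
  exact sum_lt_sum (fun B hB => h.one_le_card hB)
    ⟨B, hB, (h.one_le_card hB).lt_of_ne (Ne.symm hB1)⟩

end IsMSP

theorem finite_setOf_isMSP (S : Multiset ℕ) : {pi | IsMSP pi S}.Finite :=
  (finite_setOf_card_le_of_forall_mem S.powerset (card S)).subset fun _ h =>
    ⟨h.card_le, fun _ hB => mem_powerset.2 (h.2 ▸ le_sum_of_mem hB)⟩

noncomputable def properMSP (lam : Multiset ℕ+) : Finset (Multiset (Multiset ℕ)) :=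
  (finite_setOf_isMSP (contentMultiset lam)).toFinset.erase ((contentMultiset lam).map ({·}))

theorem psize_mtilde_lt {lam : Multiset ℕ+} {pi : Multiset (Multiset ℕ)}
    (hpi : pi ∈ properMSP lam) : psize (mtilde pi) < psize lam := by
  rw [properMSP, Finset.mem_erase, Set.Finite.mem_toFinset] at hpi
  rw [psize_mtilde, ← card_contentMultiset]
  exact hpi.2.card_lt hpi.1

theorem hTdef_iff (f : Multiset ℕ+ → SymF) :
    HTdef f ↔ ∀ lam, hProd lam = f lam + ∑ pi ∈ properMSP lam, f (mtilde pi) := by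
  refine forall_congr' fun lam => ?_
  rw [finsum_mem_eq_finite_toFinset_sum _ (finite_setOf_isMSP _), properMSP,
    ← Finset.add_sum_erase _ _ ((finite_setOf_isMSP _).mem_toFinset.2 (isMSP_map_singleton _)),
    mtilde_map_singleton_contentMultiset]

/-- There is a unique family `h̃` of symmetric functions satisfying
`h_λ = Σ_{π ⊩ {1^{λ_1},…,ℓ^{λ_ℓ}}} h̃_{m̃(π)}` for every partition `λ`; moreover each
`h̃_λ` has top homogeneous component `h_λ` (every monomial of `h̃_λ - h_λ` has weighted
degree `< |λ|`), and the family `{h̃_λ}` is a linear basis of `Sym` over `ℚ`. -/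
theorem existsUnique_inducedTrivialCharacterBasis :
    (∃! ht : Multiset ℕ+ → SymF, HTdef ht) ∧
    ∀ ht : Multiset ℕ+ → SymF, HTdef ht →
      (∀ lam : Multiset ℕ+, ∀ d ∈ (ht lam - hProd lam).support,
          ∑ k ∈ d.support, (k : ℕ) * d k < psize lam) ∧
      ∃ b : Module.Basis (Multiset ℕ+) ℚ SymF, ⇑b = ht := by
  simp only [hTdef_iff]
  have hE : ∀ lam, ∀ pi ∈ properMSP lam, psize (mtilde pi) < psize lam :=
    fun _ _ => psize_mtilde_lt
  refine ⟨existsUnique_eq_add_sum hE hProd, fun ht hht => ⟨fun lam d hd => ?_, ?_⟩⟩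
  · have hlow := span_hProd_le_restrictSupport _ (sub_mem_span_of_eq_add_sum ℚ hE hht lam) hd
    simpa [Finsupp.weight_apply, Finsupp.sum, mul_comm] using hlow
  · have hv : ∀ lam, ht lam - hBasis lam ∈
        Submodule.span ℚ (hBasis '' {mu | psize mu < psize lam}) := by
      rw [coe_hBasis]
      exact sub_mem_span_of_eq_add_sum ℚ hE hht
    exact ⟨hBasis.ofUnitriangular hv, Module.Basis.coe_ofUnitriangular hv⟩

end
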